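/- Let 0 < ε < 1/2, let G be a d-regular ε-spectral expander on 2n vertices, and suppose k = (1−ε)n is a nonnegative integer. Then m(k) ≥ (d/e)^{(1−ε)n} · e^{−2εn}. -/

import Mathlib

/-!
Greedy counting driven by the expander mixing lemma. Write `N = 2n` and `m(i)` for the number of
`i`-matchings. Testing `σ₂` against `𝟙_S - (|S|/N) 𝟙`, which is orthogonal to `𝟙`, shows that a
set `S` of vertices spans at least `d|S|²/(2N) - εd|S|/2` edges. For an `i`-matching `M` with
`i < k` the `2(n - i)` uncovered vertices therefore span at least `B i = (d/n)(n - i)(k - i)`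
edges (using `εn = n - k`), and each of them extends `M` to an `(i+1)`-matching; conversely an
`(i+1)`-matching contains only `i + 1` matchings of size `i`. So `m(i) B i ≤ m(i+1)(i+1)`, and
telescoping gives `m(k) k! ≥ ∏ B i = (d/n)^k n^(k) k!`, with `n^(k)` the falling factorial.
Finally `n^(k) ≥ n^k e^{-n}` because `n^n ≤ eⁿ n!` and `(n - k)! ≤ n^(n-k)`, and
`e^{-(n-k)} = e^{-εn} ≥ e^{-2εn}`.
-/

open Matrix Finset

/-- The normalized adjacency matrix `Ã = A / d` of a (`d`-regular) graph. -/
noncomputable def normAdj {N : ℕ} (G : SimpleGraph (Fin N)) [DecidableRel G.Adj] (d : ℕ) :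
    Matrix (Fin N) (Fin N) ℝ :=
  (d : ℝ)⁻¹ • (SimpleGraph.adjMatrix ℝ G)

/-- `σ₂(Ã) = max(λ₂, |λ_N|)`, expressed via the Rayleigh quotient characterization:
for a `d`-regular graph the all-ones vector is a top eigenvector (with eigenvalue `λ₁ = 1`),
so `max(λ₂, |λ_N|)` is the supremum of `|xᵀ Ã x|` over unit vectors `x` orthogonal to
the all-ones vector. -/
noncomputable def sigma2 {N : ℕ} (G : SimpleGraph (Fin N)) [DecidableRel G.Adj] (d : ℕ) : ℝ :=
  sSup {r : ℝ | ∃ x : Fin N → ℝ, x ⬝ᵥ x = 1 ∧ (∑ i, x i) = 0 ∧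
    r = |x ⬝ᵥ (normAdj G d).mulVec x|}

/-- A matching in `G`: a set of edges of `G` that are pairwise disjoint. -/
def IsMatchingSet {N : ℕ} (G : SimpleGraph (Fin N)) (M : Finset (Sym2 (Fin N))) : Prop :=
  (↑M : Set (Sym2 (Fin N))) ⊆ G.edgeSet ∧
    ∀ e ∈ M, ∀ f ∈ M, e ≠ f → ∀ v : Fin N, v ∈ e → v ∉ f

/-- `m(k)`: the number of `k`-matchings of `G`. -/
noncomputable def numMatchings {N : ℕ} (G : SimpleGraph (Fin N)) (k : ℕ) : ℕ :=
  Nat.card {M : Finset (Sym2 (Fin N)) // IsMatchingSet G M ∧ M.card = k}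

open scoped Nat

namespace SimpleGraph

variable {V : Type*} [Fintype V] {G : SimpleGraph V} [DecidableRel G.Adj]

lemma dotProduct_adjMatrix_mulVec_sub_const {d : ℕ} (hreg : G.IsRegularOfDegree d) (a : V → ℝ)
    (c : ℝ) :
    (a - c • 1) ⬝ᵥ G.adjMatrix ℝ *ᵥ (a - c • 1) =
      a ⬝ᵥ G.adjMatrix ℝ *ᵥ a - 2 * c * d * ∑ v, a v + c ^ 2 * d * Fintype.card V := by
  have hA1 : G.adjMatrix ℝ *ᵥ 1 = (d : ℝ) • 1 := by
    ext v; simpa using adjMatrix_mulVec_const_apply_of_regular hreg (a := (1 : ℝ)) (v := v)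
  have h1A : 1 ⬝ᵥ G.adjMatrix ℝ *ᵥ a = a ⬝ᵥ G.adjMatrix ℝ *ᵥ 1 := by
    rw [dotProduct_mulVec, ← mulVec_transpose, transpose_adjMatrix, dotProduct_comm]
  simp only [mulVec_sub, mulVec_smul, sub_dotProduct, dotProduct_sub, smul_dotProduct,
    dotProduct_smul, h1A, hA1, smul_eq_mul]
  rw [one_dotProduct_one]
  simp only [dotProduct_one]
  ring

lemma indicator_dotProduct_adjMatrix_mulVec_indicator [DecidableEq V] (S : Finset V) :
    (fun v => if v ∈ S then (1 : ℝ) else 0) ⬝ᵥ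
        G.adjMatrix ℝ *ᵥ (fun v => if v ∈ S then (1 : ℝ) else 0) =
      2 * #(G.edgeFinset ∩ S.sym2) := by
  -- both sides count the darts of `G.induce S`
  have h := (G.induce (S : Set V)).natCast_card_dart_eq_dotProduct (α := ℝ)
  rw [dart_card_eq_twice_card_edges, ← card_filter_edgeFinset_toFinset_subset,
    filter_edgeFinset_toFinset_subset] at h
  push_cast at h
  rw [h]
  simp [dotProduct, mulVec, adjMatrix_apply, ite_mul, filter_attach (G.Adj _),
    sum_attach S fun i => (#{j ∈ S | G.Adj i j} : ℝ)]

end SimpleGraph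

lemma Matrix.abs_dotProduct_mulVec_le_sum_abs {ι : Type*} [Fintype ι] (M : Matrix ι ι ℝ)
    {x : ι → ℝ} (hx : x ⬝ᵥ x = 1) : |x ⬝ᵥ M *ᵥ x| ≤ ∑ i, ∑ j, |M i j| := by
  have hxi : ∀ i, |x i| ≤ 1 := fun i => by
    rw [← sq_le_one_iff_abs_le_one, ← hx, sq]
    exact single_le_sum (f := fun j => x j * x j) (fun j _ => mul_self_nonneg (x j)) (mem_univ i)
  calc |x ⬝ᵥ M *ᵥ x| ≤ ∑ i, ∑ j, |x i| * |M i j| * |x j| := by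
        simp only [dotProduct, mulVec, mul_sum, ← abs_mul]
        exact (abs_sum_le_sum_abs _ _).trans
          (sum_le_sum fun i _ => (abs_sum_le_sum_abs _ _).trans_eq (by simp only [mul_assoc]))
    _ ≤ ∑ i, ∑ j, |M i j| := by
        gcongr with i _ j _
        calc |x i| * |M i j| * |x j| ≤ 1 * |M i j| * 1 := by gcongr <;> exact hxi _
          _ = |M i j| := by ring

lemma abs_dotProduct_normAdj_mulVec_le {N d : ℕ} {ε : ℝ} (G : SimpleGraph (Fin N))
    [DecidableRel G.Adj] (hexp : sigma2 G d ≤ ε) {x : Fin N → ℝ} (hx : ∑ i, x i = 0) :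
    |x ⬝ᵥ normAdj G d *ᵥ x| ≤ ε * (x ⬝ᵥ x) := by
  have hnonneg : 0 ≤ x ⬝ᵥ x := sum_nonneg fun i _ => mul_self_nonneg (x i)
  rcases hnonneg.eq_or_lt with hzero | hpos
  · simp [dotProduct_self_eq_zero.mp hzero.symm]
  set y := (√(x ⬝ᵥ x))⁻¹ • x
  have hsqrt : √(x ⬝ᵥ x) ^ 2 = x ⬝ᵥ x := Real.sq_sqrt hpos.le
  have hy : |y ⬝ᵥ normAdj G d *ᵥ y| ≤ ε := by
    unfold sigma2 at hexp
    refine le_trans (le_csSup ⟨∑ i, ∑ j, |normAdj G d i j|, ?_⟩ ?_) hexp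
    · rintro _ ⟨z, hz, -, rfl⟩
      exact abs_dotProduct_mulVec_le_sum_abs _ hz
    refine ⟨y, ?_, ?_, rfl⟩
    · simp only [y, smul_dotProduct, dotProduct_smul, smul_eq_mul, ← mul_assoc, ← sq, inv_pow,
        hsqrt, inv_mul_cancel₀ hpos.ne']
    · simp [y, ← mul_sum, hx]
  have hyx : y ⬝ᵥ normAdj G d *ᵥ y = (x ⬝ᵥ normAdj G d *ᵥ x) / (x ⬝ᵥ x) := by
    simp only [y, mulVec_smul, smul_dotProduct, dotProduct_smul, smul_eq_mul, ← mul_assoc, ← sq,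
      inv_pow, hsqrt]
    ring
  rw [hyx, abs_div, abs_of_pos hpos, div_le_iff₀ hpos] at hy
  exact hy

lemma expander_mixing {N d : ℕ} {ε : ℝ} (G : SimpleGraph (Fin N)) [DecidableRel G.Adj]
    (hε : 0 ≤ ε) (hreg : G.IsRegularOfDegree d) (hexp : sigma2 G d ≤ ε) (S : Finset (Fin N)) :
    d * #S ^ 2 / N - ε * d * #S ≤ 2 * #(G.edgeFinset ∩ S.sym2) := by
  rcases Nat.eq_zero_or_pos d with rfl | hd
  · simp
  rcases S.eq_empty_or_nonempty with rfl | ⟨v, -⟩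
  · simp
  have hN : (0 : ℝ) < N := by exact_mod_cast v.pos
  set s : ℝ := ((#S : ℕ) : ℝ)
  set a : Fin N → ℝ := fun v => if v ∈ S then 1 else 0
  set c : ℝ := s / N
  set x : Fin N → ℝ := a - c • 1
  have hsum_a : ∑ v, a v = s := by simp [a, s]
  have hsum_x : ∑ v, x v = 0 := by
    simp only [x, c, Pi.sub_apply, Pi.smul_apply, Pi.one_apply, smul_eq_mul, mul_one,
      sum_sub_distrib, hsum_a, sum_const, card_univ, Fintype.card_fin, nsmul_eq_mul]
    field_simp
    ring
  have hxx : x ⬝ᵥ x = s - s ^ 2 / N := by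
    have hsq : ∀ v, x v * x v = (1 - 2 * c) * a v + c ^ 2 := fun v => by
      simp only [x, a, Pi.sub_apply, Pi.smul_apply, Pi.one_apply, smul_eq_mul, mul_one]
      split_ifs <;> ring
    simp only [dotProduct, hsq, sum_add_distrib, ← mul_sum, hsum_a, sum_const, card_univ,
      Fintype.card_fin, nsmul_eq_mul, c]
    field_simp
    ring
  have hquad : x ⬝ᵥ G.adjMatrix ℝ *ᵥ x = 2 * #(G.edgeFinset ∩ S.sym2) - d * s ^ 2 / N := by
    rw [SimpleGraph.dotProduct_adjMatrix_mulVec_sub_const hreg,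
      SimpleGraph.indicator_dotProduct_adjMatrix_mulVec_indicator, hsum_a, Fintype.card_fin]
    simp only [c]
    field_simp
    ring
  have hspec : |x ⬝ᵥ G.adjMatrix ℝ *ᵥ x| ≤ ε * d * (x ⬝ᵥ x) := by
    have hA : G.adjMatrix ℝ = (d : ℝ) • normAdj G d := by
      rw [normAdj, smul_smul, mul_inv_cancel₀ (by positivity), one_smul]
    rw [hA, smul_mulVec, dotProduct_smul, smul_eq_mul, abs_mul, Nat.abs_cast]
    calc (d : ℝ) * |x ⬝ᵥ normAdj G d *ᵥ x| ≤ d * (ε * (x ⬝ᵥ x)) := by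
          gcongr; exact abs_dotProduct_normAdj_mulVec_le G hexp hsum_x
      _ = ε * d * (x ⬝ᵥ x) := by ring
  have hxs : x ⬝ᵥ x ≤ s := by
    rw [hxx]
    linarith [(by positivity : 0 ≤ s ^ 2 / N)]
  calc d * s ^ 2 / N - ε * d * s ≤ d * s ^ 2 / N - ε * d * (x ⬝ᵥ x) := by gcongr
    _ ≤ 2 * (#(G.edgeFinset ∩ S.sym2) : ℝ) := by
      linarith [neg_abs_le (x ⬝ᵥ G.adjMatrix ℝ *ᵥ x)]

section Matchings

variable {N : ℕ}

open scoped Classical in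
noncomputable def matchingsOfCard (G : SimpleGraph (Fin N)) (i : ℕ) :
    Finset (Finset (Sym2 (Fin N))) :=
  {M | IsMatchingSet G M ∧ #M = i}

variable {G : SimpleGraph (Fin N)}

lemma mem_matchingsOfCard {i : ℕ} {M : Finset (Sym2 (Fin N))} :
    M ∈ matchingsOfCard G i ↔ IsMatchingSet G M ∧ #M = i := by
  classical
  simp [matchingsOfCard]

lemma numMatchings_eq_card_matchingsOfCard (i : ℕ) :
    numMatchings G i = #(matchingsOfCard G i) := by
  classical
  rw [numMatchings, Nat.card_eq_fintype_card, Fintype.card_subtype, matchingsOfCard]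

lemma matchingsOfCard_zero : matchingsOfCard G 0 = {∅} := by
  ext M
  simp only [mem_matchingsOfCard, card_eq_zero, mem_singleton, and_iff_right_iff_imp]
  rintro rfl
  simp [IsMatchingSet]

lemma IsMatchingSet.insert {M : Finset (Sym2 (Fin N))} {e : Sym2 (Fin N)}
    (hM : IsMatchingSet G M) (he : e ∈ G.edgeSet) (hdisj : ∀ v ∈ e, ∀ f ∈ M, v ∉ f) :
    IsMatchingSet G (insert e M) := by
  refine ⟨?_, ?_⟩
  · rw [coe_insert]
    exact Set.insert_subset he hM.1
  · simp only [mem_insert]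
    rintro f (rfl | hf) g (rfl | hg) hfg v hvf
    · exact absurd rfl hfg
    · exact hdisj v hvf g hg
    · exact fun hvg => hdisj v hvg f hf hvf
    · exact hM.2 f hf g hg hfg v hvf

noncomputable def unmatchedVerts (M : Finset (Sym2 (Fin N))) : Finset (Fin N) :=
  (M.biUnion Sym2.toFinset)ᶜ

lemma mem_unmatchedVerts {M : Finset (Sym2 (Fin N))} {v : Fin N} :
    v ∈ unmatchedVerts M ↔ ∀ e ∈ M, v ∉ e := by
  simp [unmatchedVerts]

lemma card_unmatchedVerts {M : Finset (Sym2 (Fin N))} (hM : IsMatchingSet G M) :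
    #(unmatchedVerts M) = N - 2 * #M := by
  rw [unmatchedVerts, card_compl, Fintype.card_fin, card_biUnion]
  · rw [sum_const_nat fun e he => Sym2.card_toFinset_of_not_isDiag e
      (G.not_isDiag_of_mem_edgeSet (hM.1 he)), mul_comm]
  · intro e he f hf hef
    simp only [Function.onFun, disjoint_left, Sym2.mem_toFinset]
    exact fun v hve => hM.2 e he f hf hef v hve

lemma notMem_of_mem_sym2_unmatchedVerts {M : Finset (Sym2 (Fin N))} {e : Sym2 (Fin N)}
    (he : e ∈ (unmatchedVerts M).sym2) : e ∉ M :=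
  fun heM => mem_unmatchedVerts.mp (mem_sym2_iff.mp he _ e.out_fst_mem) e heM e.out_fst_mem

lemma card_edgeFinset_inter_sym2_unmatchedVerts_le [DecidableRel G.Adj]
    {M : Finset (Sym2 (Fin N))} (hM : IsMatchingSet G M) :
    #(G.edgeFinset ∩ (unmatchedVerts M).sym2) ≤
      #{M' ∈ matchingsOfCard G (#M + 1) | M ⊆ M'} := by
  refine card_le_card_of_injOn (fun e => insert e M) (fun e he => ?_) (fun e he e' _ hee' => ?_)
  · simp only [coe_inter, Set.mem_inter_iff, mem_coe, SimpleGraph.mem_edgeFinset] at he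
    have heM := notMem_of_mem_sym2_unmatchedVerts he.2
    rw [coe_filter, Set.mem_ofPred_eq, mem_matchingsOfCard]
    refine ⟨⟨hM.insert he.1 fun v hv => ?_, card_insert_of_notMem heM⟩, subset_insert e M⟩
    exact mem_unmatchedVerts.mp (mem_sym2_iff.mp he.2 v hv)
  · rw [mem_coe, mem_inter] at he
    exact (insert_inj (notMem_of_mem_sym2_unmatchedVerts he.2)).mp hee'

lemma card_matchingsOfCard_mul_le {i : ℕ} {c : ℝ}
    (hc : ∀ M ∈ matchingsOfCard G i, c ≤ #{M' ∈ matchingsOfCard G (i + 1) | M ⊆ M'}) :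
    #(matchingsOfCard G i) * c ≤ #(matchingsOfCard G (i + 1)) * (i + 1 : ℝ) := by
  have hbelow : ∀ M' ∈ matchingsOfCard G (i + 1),
      (#{M ∈ matchingsOfCard G i | M ⊆ M'} : ℝ) ≤ i + 1 := fun M' hM' => by
    calc (#{M ∈ matchingsOfCard G i | M ⊆ M'} : ℝ) ≤ #(M'.powersetCard i) := by
          refine Nat.cast_le.mpr (card_le_card fun M hM => ?_)
          rw [mem_filter, mem_matchingsOfCard] at hM
          exact mem_powersetCard.mpr ⟨hM.2, hM.1.2⟩
      _ = i + 1 := by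
          rw [card_powersetCard, (mem_matchingsOfCard.mp hM').2, Nat.choose_succ_self_right]
          push_cast; ring
  simpa only [nsmul_eq_mul] using card_nsmul_le_card_nsmul (fun M M' => M ⊆ M')
    (s := matchingsOfCard G i) (t := matchingsOfCard G (i + 1)) hc hbelow

end Matchings

lemma card_matchingsOfCard_mul_le_of_expander {n d k i : ℕ} {ε : ℝ}
    (G : SimpleGraph (Fin (2 * n))) [DecidableRel G.Adj] (hε : 0 ≤ ε)
    (hreg : G.IsRegularOfDegree d) (hexp : sigma2 G d ≤ ε) (hk : (k : ℝ) = (1 - ε) * n)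
    (hi : i < k) :
    #(matchingsOfCard G i) * (d / n * ((n - i) * (k - i))) ≤
      #(matchingsOfCard G (i + 1)) * (i + 1 : ℝ) := by
  have hn : (0 : ℝ) < n := by
    have : (i : ℝ) < k := by exact_mod_cast hi
    nlinarith
  refine card_matchingsOfCard_mul_le fun M hMi => ?_
  obtain ⟨hM, rfl⟩ := mem_matchingsOfCard.mp hMi
  refine le_trans ?_ (Nat.cast_le.mpr (card_edgeFinset_inter_sym2_unmatchedVerts_le hM))
  have hmix := expander_mixing G hε hreg hexp (unmatchedVerts M)
  have hcard : (#(unmatchedVerts M) : ℝ) = 2 * (n - #M) := by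
    have : 2 * #M ≤ 2 * n := by
      have : (#M : ℝ) < k := by exact_mod_cast hi
      have : (#M : ℝ) < n := by nlinarith
      exact_mod_cast (by linarith : (2 * #M : ℝ) ≤ 2 * n)
    rw [card_unmatchedVerts hM, Nat.cast_sub this]
    push_cast; ring
  rw [hcard] at hmix
  have hεn : ε = (n - k) / n := by field_simp; linarith
  have : (d : ℝ) * (2 * (n - #M)) ^ 2 / ↑(2 * n) - ε * d * (2 * (n - #M)) =
      2 * (d / n * ((n - #M) * (k - #M))) := by
    rw [hεn]; push_cast; field_simp; ring
  linarith

lemma prod_le_mul_factorial_of_mul_le {m B : ℕ → ℝ} {k : ℕ} (h0 : m 0 = 1)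
    (hB : ∀ i < k, 0 ≤ B i) (hstep : ∀ i < k, m i * B i ≤ m (i + 1) * (i + 1)) :
    ∏ i ∈ range k, B i ≤ m k * k ! := by
  induction k with
  | zero => simp [h0]
  | succ k ih =>
    have ih := ih (fun i hi => hB i (by omega)) (fun i hi => hstep i (by omega))
    calc ∏ i ∈ range (k + 1), B i = (∏ i ∈ range k, B i) * B k := prod_range_succ _ _
      _ ≤ m k * k ! * B k := mul_le_mul_of_nonneg_right ih (hB k (by omega))
      _ = m k * B k * k ! := by ring
      _ ≤ m (k + 1) * (k + 1) * k ! :=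
        mul_le_mul_of_nonneg_right (hstep k (by omega)) (by positivity)
      _ = m (k + 1) * (k + 1) ! := by push_cast [Nat.factorial_succ]; ring

lemma prod_range_natCast_sub {n k : ℕ} (hkn : k ≤ n) :
    ∏ i ∈ range k, ((n : ℝ) - i) = n.descFactorial k := by
  rw [Nat.descFactorial_eq_prod_range, Nat.cast_prod]
  exact prod_congr rfl fun i hi => (Nat.cast_sub (by simp at hi; omega)).symm

theorem div_pow_mul_descFactorial_le_numMatchings {n d k : ℕ} {ε : ℝ}
    (G : SimpleGraph (Fin (2 * n))) [DecidableRel G.Adj] (hε : 0 ≤ ε)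
    (hreg : G.IsRegularOfDegree d) (hexp : sigma2 G d ≤ ε) (hk : (k : ℝ) = (1 - ε) * n) :
    ((d : ℝ) / n) ^ k * n.descFactorial k ≤ numMatchings G k := by
  have hkn : k ≤ n := by exact_mod_cast (by nlinarith : (k : ℝ) ≤ n)
  have hprod := prod_le_mul_factorial_of_mul_le (m := fun i => (#(matchingsOfCard G i) : ℝ))
    (B := fun i => d / n * ((n - i) * (k - i))) (by simp [matchingsOfCard_zero])
    (fun i hi => by
      have : (i : ℝ) ≤ k := by exact_mod_cast hi.le
      have : (k : ℝ) ≤ n := by exact_mod_cast hkn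
      apply mul_nonneg (by positivity); nlinarith)
    (fun i hi => card_matchingsOfCard_mul_le_of_expander G hε hreg hexp hk hi)
  rw [prod_mul_distrib, prod_mul_distrib, prod_const, card_range, prod_range_natCast_sub hkn,
    prod_range_natCast_sub le_rfl, Nat.descFactorial_self, ← mul_assoc] at hprod
  rw [numMatchings_eq_card_matchingsOfCard]
  exact le_of_mul_le_mul_right hprod (by positivity)

lemma natCast_pow_le_exp_mul_descFactorial {n k : ℕ} (hkn : k ≤ n) :
    (n : ℝ) ^ k ≤ Real.exp n * n.descFactorial k := by
  rcases Nat.eq_zero_or_pos n with rfl | hn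
  · simp [Nat.le_zero.mp hkn]
  have hfact : (n ! : ℝ) = (n - k) ! * n.descFactorial k := by
    exact_mod_cast (Nat.factorial_mul_descFactorial hkn).symm
  have hsub : ((n - k) ! : ℝ) ≤ (n : ℝ) ^ (n - k) := by
    exact_mod_cast (Nat.factorial_le_pow _).trans (Nat.pow_le_pow_left (Nat.sub_le n k) _)
  have hstirling : (n : ℝ) ^ n ≤ Real.exp n * n ! := by
    have := Real.pow_div_factorial_le_exp _ (Nat.cast_nonneg n) n
    rwa [div_le_iff₀ (by positivity)] at this
  have : (n : ℝ) ^ k * (n : ℝ) ^ (n - k) ≤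
      (Real.exp n * n.descFactorial k) * (n : ℝ) ^ (n - k) := by
    rw [← pow_add, Nat.add_sub_cancel' hkn]
    calc (n : ℝ) ^ n ≤ Real.exp n * n ! := hstirling
      _ = Real.exp n * ((n - k) ! * n.descFactorial k) := by rw [hfact]
      _ ≤ Real.exp n * ((n : ℝ) ^ (n - k) * n.descFactorial k) := by gcongr
      _ = _ := by ring
  exact le_of_mul_le_mul_right this (by positivity)

theorem many_near_perfect_matchings_general (n d k : ℕ)
    (ε : ℝ) (hε0 : 0 < ε)
    (G : SimpleGraph (Fin (2 * n))) [DecidableRel G.Adj]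
    (hreg : G.IsRegularOfDegree d) (hexp : sigma2 G d ≤ ε)
    (hk : (k : ℝ) = (1 - ε) * n) :
    ((d : ℝ) / Real.exp 1) ^ ((1 - ε) * (n : ℝ)) * Real.exp (-(2 * ε * n)) ≤
      (numMatchings G k : ℝ) := by
  have hkn : k ≤ n := by exact_mod_cast (by nlinarith : (k : ℝ) ≤ n)
  rw [← hk, Real.rpow_natCast]
  refine le_trans ?_ (div_pow_mul_descFactorial_le_numMatchings G hε0.le hreg hexp hk)
  rcases Nat.eq_zero_or_pos n with rfl | hn
  · simp [Nat.le_zero.mp hkn]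
  have hεn : ε * n = n - k := by linarith
  calc ((d : ℝ) / Real.exp 1) ^ k * Real.exp (-(2 * ε * n))
      ≤ ((d : ℝ) / Real.exp 1) ^ k * Real.exp (-n + k) := by
        gcongr; nlinarith [mul_nonneg hε0.le (Nat.cast_nonneg (α := ℝ) n)]
    _ = ((d : ℝ) / n) ^ k * ((n : ℝ) ^ k / Real.exp n) := by
        rw [div_pow, div_pow, Real.exp_one_pow, Real.exp_add, Real.exp_neg]
        field_simp
    _ ≤ ((d : ℝ) / n) ^ k * n.descFactorial k := by
        gcongr
        rw [div_le_iff₀ (Real.exp_pos _), mul_comm]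
        exact natCast_pow_le_exp_mul_descFactorial hkn

/-- A `d`-regular `ε`-spectral expander on `2n` vertices (with `0 < ε < 1/2`) has at least
`(d/e)^{(1−ε)n} · e^{−2εn}` many `(1−ε)n`-matchings (assuming `(1−ε)n` is a nonnegative
integer `k`). -/
theorem many_near_perfect_matchings (n d k : ℕ)
    (ε : ℝ) (hε0 : 0 < ε) (hε : ε < 1 / 2)
    (G : SimpleGraph (Fin (2 * n))) [DecidableRel G.Adj]
    (hreg : G.IsRegularOfDegree d) (hexp : sigma2 G d ≤ ε)
    (hk : (k : ℝ) = (1 - ε) * n) :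
    ((d : ℝ) / Real.exp 1) ^ ((1 - ε) * (n : ℝ)) * Real.exp (-(2 * ε * n)) ≤
      (numMatchings G k : ℝ) :=
  many_near_perfect_matchings_general n d k ε hε0 G hreg hexp hk
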